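/- arXiv:2108.08079 — 2 statements merged into one kernel-verified Lean document; each statement's English description precedes it below -/
import Mathlib

section
/- (A correct triple of full length yields an n-queens solution.) Let n ≥ 1 and let cs, us, ds be ground terms such that (cs, us, ds) is correct up to n w.r.t. n and cs is a list of length n. Then there is a bijection col : {1,…,n} → {1,…,n} such that for each j ∈ {1,…,n} the numeral ⌜j⌝ is the col(j)-th member of cs, the values j + col(j) for j ∈ {1,…,n} are pairwise distinct, and the values col(j) − j for j ∈ {1,…,n} are pairwise distinct. In other words, placing the queen of each row j ∈ {1,…,n} on column col(j) puts exactly one queen in every row and every column and at most one queen on every diagonal of the n × n chessboard. -/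
/-- Ground terms of the n-queens program. -/
inductive Term : Type where
  | zero : Term
  | succ : Term → Term
  | nil  : Term
  | cons : Term → Term → Term

/-- The numeral `⌜n⌝`: `succ` applied `n` times to `zero`. -/
def numeral : ℕ → Term
  | 0 => Term.zero
  | n + 1 => Term.succ (numeral n)

/-- `NthMember k e t`: `e` is the `k`-th member (`k ≥ 1`) of the term `t`. -/
inductive NthMember : ℕ → Term → Term → Prop where
  | head (e t' : Term) : NthMember 1 e (Term.cons e t')
  | tail {k : ℕ} {e t' : Term} (e₁ : Term) :
      NthMember k e t' → NthMember (k + 1) e (Term.cons e₁ t')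

/-- `e` is a member of `t`. -/
def IsMember (e t : Term) : Prop := ∃ k : ℕ, 1 ≤ k ∧ NthMember k e t

/-- `t` is a list of length `n`. -/
inductive ListOfLength : ℕ → Term → Prop where
  | nil : ListOfLength 0 Term.nil
  | cons {n : ℕ} {t : Term} (e : Term) :
      ListOfLength n t → ListOfLength (n + 1) (Term.cons e t)

/-- `t` is a list (of some length). -/
def IsList (t : Term) : Prop := ∃ n : ℕ, ListOfLength n t

/-- `t` is a list of pairwise distinct members. -/
def DistinctList (t : Term) : Prop :=
  IsList t ∧
  ∀ (k k' : ℕ) (e e' : Term),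
    NthMember k e t → NthMember k' e' t → k ≠ k' → e ≠ e'

/-- The triple `(cs, us, ds)` is correct up to `m` w.r.t. `i`
(`0 ≤ m ≤ i`).  The up-diagonal number of queen `j` sitting at the `k`-th
column is the integer `k + j - i`, the down-diagonal number is `k + i - j`. -/
def CorrectUpTo (m i : ℕ) (cs us ds : Term) : Prop :=
  m ≤ i ∧
  DistinctList cs ∧
  (∀ j : ℕ, 1 ≤ j → j ≤ m → IsMember (numeral j) cs) ∧
  -- the up-diagonal numbers of 1,…,m are pairwise distinct
  (∀ j j' k k' : ℕ, 1 ≤ j → j ≤ m → 1 ≤ j' → j' ≤ m → j ≠ j' →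
    NthMember k (numeral j) cs → NthMember k' (numeral j') cs →
    (k : ℤ) + j - i ≠ (k' : ℤ) + j' - i) ∧
  -- the down-diagonal numbers of 1,…,m are pairwise distinct
  (∀ j j' k k' : ℕ, 1 ≤ j → j ≤ m → 1 ≤ j' → j' ≤ m → j ≠ j' →
    NthMember k (numeral j) cs → NthMember k' (numeral j') cs →
    (k : ℤ) + i - j ≠ (k' : ℤ) + i - j') ∧
  -- positive up-diagonal numbers are recorded in us
  (∀ j k l : ℕ, 1 ≤ j → j ≤ m → NthMember k (numeral j) cs →
    (l : ℤ) = (k : ℤ) + j - i → 0 < l → NthMember l (numeral j) us) ∧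
  -- positive down-diagonal numbers are recorded in ds
  (∀ j k l : ℕ, 1 ≤ j → j ≤ m → NthMember k (numeral j) cs →
    (l : ℤ) = (k : ℤ) + i - j → 0 < l → NthMember l (numeral j) ds)

/-- Ground atoms. -/
inductive Atom : Type where
  | pq  : Term → Term → Term → Term → Atom
  | pqs : Term → Term → Term → Term → Atom

/-- `S` is an (Herbrand) model of the ground definite program `P`:
for every clause `(H, B) ∈ P` whose body atoms all lie in `S`, also `H ∈ S`. -/
def IsModel {A : Type} (P : Set (A × List A)) (S : Set A) : Prop :=
  ∀ (H : A) (B : List A), (H, B) ∈ P → (∀ b ∈ B, b ∈ S) → H ∈ S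

/-- The least Herbrand model of `P` (the least set of atoms closed
under all the clauses of `P`). -/
def LeastModel {A : Type} (P : Set (A × List A)) : Set A :=
  ⋂₀ { S : Set A | IsModel P S }

/-- The ground instances of the four clauses of the program NQUEENS. -/
inductive NQClause : Atom × List Atom → Prop where
  | c1 (x y z : Term) :
      NQClause (Atom.pqs Term.zero x y z, [])
  | c2 (i cs us ds u d : Term) :
      NQClause (Atom.pqs (Term.succ i) cs us (Term.cons d ds),
        [Atom.pqs i cs (Term.cons u us) ds, Atom.pq (Term.succ i) cs us ds])
  | c3 (i c u d : Term) :
      NQClause (Atom.pq i (Term.cons i c) (Term.cons i u) (Term.cons i d), [])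
  | c4 (i cs us ds c u d : Term) :
      NQClause (Atom.pq i (Term.cons c cs) (Term.cons u us) (Term.cons d ds),
        [Atom.pq i cs us ds])

/-- The program NQUEENS as a set of ground clauses. -/
def NQUEENS : Set (Atom × List Atom) := { cl | NQClause cl }

/-- The ground instances of the two clauses defining `pq`. -/
inductive PQClause : Atom × List Atom → Prop where
  | c3 (i c u d : Term) :
      PQClause (Atom.pq i (Term.cons i c) (Term.cons i u) (Term.cons i d), [])
  | c4 (i cs us ds c u d : Term) :
      PQClause (Atom.pq i (Term.cons c cs) (Term.cons u us) (Term.cons d ds),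
        [Atom.pq i cs us ds])

/-- The program defining `pq`, as a set of ground clauses. -/
def PQprog : Set (Atom × List Atom) := { cl | PQClause cl }

/-- The specification `S_pq`. -/
def SpecPq : Set Atom :=
  { a | ∃ (i cs us ds : Term) (k : ℕ), 1 ≤ k ∧ a = Atom.pq i cs us ds ∧
        NthMember k i cs ∧ NthMember k i us ∧ NthMember k i ds }

/-- The specification `S_pqs` (for correctness). -/
def SpecPqs : Set Atom :=
  { a | ∃ cs us ds : Term, a = Atom.pqs Term.zero cs us ds } ∪
  { a | ∃ (i : ℕ) (cs us t ds : Term), 1 ≤ i ∧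
        a = Atom.pqs (numeral i) cs us (Term.cons t ds) ∧
        (∀ j : ℕ, 1 ≤ j → j ≤ i → IsMember (numeral j) cs) ∧
        (DistinctList cs → CorrectUpTo i i cs us ds) }

/-- The specification `S = S_pq ∪ S_pqs` (for correctness). -/
def Spec : Set Atom := SpecPq ∪ SpecPqs

/-- The specification `S⁰` (for completeness). -/
def Spec0 : Set Atom :=
  SpecPq ∪ { a | ∃ cs us ds : Term, a = Atom.pqs Term.zero cs us ds } ∪
  { a | ∃ (i : ℕ) (cs us t ds : Term), 1 ≤ i ∧
        a = Atom.pqs (numeral i) cs us (Term.cons t ds) ∧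
        CorrectUpTo i i cs us ds }

/-- The size function on terms. -/
def tsize : Term → ℕ
  | Term.zero => 0
  | Term.nil => 0
  | Term.succ t => 1 + tsize t
  | Term.cons _ t => 1 + tsize t

/-- The level mapping on ground atoms. -/
def level : Atom → ℕ
  | Atom.pq _ cs _ _ => tsize cs
  | Atom.pqs i cs _ _ => tsize i + tsize cs

lemma nth_pos : ∀ {k : ℕ} {e t : Term}, NthMember k e t → 1 ≤ k := by
  intro k e t hn
  induction hn with
  | head => exact le_refl 1
  | tail _ _ ih => omega

lemma nth_unique : ∀ {k : ℕ} {e e' t : Term},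
    NthMember k e t → NthMember k e' t → e = e' := by
  intro k e e' t h1
  induction h1 with
  | head e t' =>
      intro h2
      cases h2 with
      | head => rfl
      | tail _ h' => exact absurd (nth_pos h') (by omega)
  | tail e₁ h ih =>
      intro h2
      cases h2 with
      | head => exact absurd (nth_pos h) (by omega)
      | tail _ h' => exact ih h'

lemma nth_le : ∀ {k n : ℕ} {e t : Term},
    ListOfLength n t → NthMember k e t → k ≤ n := by
  intro k n e t hl hn
  induction hn generalizing n with
  | head e t' => cases hl; omega
  | tail e₁ h ih =>
      cases hl with
      | cons _ hl' => exact Nat.succ_le_succ (ih hl')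

lemma numeral_inj : ∀ {a b : ℕ}, numeral a = numeral b → a = b := by
  intro a
  induction a with
  | zero => intro b h; cases b with
      | zero => rfl
      | succ b => simp [numeral] at h
  | succ a ih => intro b h; cases b with
      | zero => simp [numeral] at h
      | succ b => simp [numeral] at h; exact congrArg Nat.succ (ih h)

/-- A correct triple of full length yields an n-queens solution. -/
theorem correct_triple_yields_solution (n : ℕ) (hn : 1 ≤ n) (cs us ds : Term)
    (h : CorrectUpTo n n cs us ds) (hlen : ListOfLength n cs) :
    ∃ col : ℕ → ℕ, Set.BijOn col (Set.Icc 1 n) (Set.Icc 1 n) ∧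
      (∀ j : ℕ, 1 ≤ j → j ≤ n → NthMember (col j) (numeral j) cs) ∧
      (∀ j j' : ℕ, 1 ≤ j → j ≤ n → 1 ≤ j' → j' ≤ n → j ≠ j' →
        j + col j ≠ j' + col j') ∧
      (∀ j j' : ℕ, 1 ≤ j → j ≤ n → 1 ≤ j' → j' ≤ n → j ≠ j' →
        (col j : ℤ) - j ≠ (col j' : ℤ) - j') := by
  obtain ⟨-, hdist, hmem, hup, hdown, -, -⟩ := h
  have hex : ∀ j : ℕ, 1 ≤ j → j ≤ n → ∃ k, NthMember k (numeral j) cs := by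
    intro j h1 h2
    obtain ⟨k, -, hk⟩ := hmem j h1 h2
    exact ⟨k, hk⟩
  classical
  set col : ℕ → ℕ := fun j =>
    if hj : 1 ≤ j ∧ j ≤ n then Classical.choose (hex j hj.1 hj.2) else 0 with hcol
  have hcolspec : ∀ j : ℕ, 1 ≤ j → j ≤ n → NthMember (col j) (numeral j) cs := by
    intro j h1 h2
    simp only [hcol, dif_pos (And.intro h1 h2)]
    exact Classical.choose_spec (hex j h1 h2)
  have hmaps : Set.MapsTo col (Set.Icc 1 n) (Set.Icc 1 n) := by
    intro j hj
    obtain ⟨h1, h2⟩ := hj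
    have := hcolspec j h1 h2
    exact ⟨nth_pos this, nth_le hlen this⟩
  have hinj : Set.InjOn col (Set.Icc 1 n) := by
    intro j hj j' hj' heq
    by_contra hne
    have e1 := hcolspec j hj.1 hj.2
    have e2 := hcolspec j' hj'.1 hj'.2
    rw [heq] at e1
    exact hne (numeral_inj (nth_unique e1 e2))
  refine ⟨col, ?_, hcolspec, ?_, ?_⟩
  · exact ((Set.finite_Icc 1 n).injOn_iff_bijOn_of_mapsTo hmaps).mp hinj
  · intro j j' h1 h2 h1' h2' hne heq
    have := hup j j' (col j) (col j') h1 h2 h1' h2' hne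
      (hcolspec j h1 h2) (hcolspec j' h1' h2')
    apply this
    omega
  · intro j j' h1 h2 h1' h2' hne heq
    have := hdown j j' (col j) (col j') h1 h2 h1' h2' hne
      (hcolspec j h1 h2) (hcolspec j' h1' h2')
    omega
end

section
/- (Answers of NQUEENS of full length are n-queens solutions.) Let n ≥ 1 and let cs, us, u be ground terms with cs a list of length n. If pqs(⌜n⌝, cs, us, u) belongs to the least Herbrand model M of NQUEENS, then u = cons t ds for some terms t, ds, the numerals ⌜1⌝,…,⌜n⌝ are members of cs, cs is a list of distinct members, and (cs, us, ds) is correct up to n w.r.t. n; in particular, cs represents a solution of the n queens problem. -/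
theorem numeral_inj_s13 {m n : ℕ} (h : numeral m = numeral n) : m = n := by
  induction m generalizing n with
  | zero =>
    cases n with
    | zero => rfl
    | succ n => simp [numeral] at h
  | succ m ih =>
    cases n with
    | zero => simp [numeral] at h
    | succ n =>
      simp only [numeral, Term.succ.injEq] at h
      rw [ih h]

theorem nthMember_pos {k : ℕ} {e t : Term} (h : NthMember k e t) : 1 ≤ k := by
  cases h <;> omega

theorem nthMember_fun {k : ℕ} {e e' t : Term} (h : NthMember k e t)
    (h' : NthMember k e' t) : e = e' := by
  induction h with
  | head e t' =>
    cases h' with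
    | head => rfl
    | tail _ h2 => exact absurd (nthMember_pos h2) (by omega)
  | tail e₁ h2 ih =>
    cases h' with
    | head => exact absurd (nthMember_pos h2) (by omega)
    | tail _ h3 => exact ih h3

theorem nthMember_le {n : ℕ} {t : Term} (hl : ListOfLength n t) :
    ∀ {k : ℕ} {e : Term}, NthMember k e t → k ≤ n := by
  induction hl with
  | nil => intro k e h; cases h
  | cons e' hl ih =>
    intro k e h
    cases h with
    | head => omega
    | tail _ h2 => exact Nat.succ_le_succ (ih h2)

theorem nthMember_tail {k : ℕ} {e a t : Term} (hk : 1 ≤ k)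
    (h : NthMember (k + 1) e (Term.cons a t)) : NthMember k e t := by
  cases h with
  | head => omega
  | tail _ h2 => exact h2

theorem distinct_uniq {cs : Term} (hd : DistinctList cs) {k k' : ℕ} {e : Term}
    (h : NthMember k e cs) (h' : NthMember k' e cs) : k = k' := by
  by_contra hne
  exact hd.2 k k' e e h h' hne rfl

theorem distinct_of_full {n : ℕ} {cs : Term} (hlen : ListOfLength n cs)
    (hmem : ∀ j, 1 ≤ j → j ≤ n → IsMember (numeral j) cs) : DistinctList cs := by
  classical
  refine ⟨⟨n, hlen⟩, ?_⟩
  have hpos : ∀ j ∈ Finset.Icc 1 n, ∃ k, NthMember k (numeral j) cs := by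
    intro j hj
    rw [Finset.mem_Icc] at hj
    obtain ⟨k, _, hk⟩ := hmem j hj.1 hj.2
    exact ⟨k, hk⟩
  set f : ∀ j ∈ Finset.Icc 1 n, ℕ := fun j hj => Classical.choose (hpos j hj) with hf
  have hspec : ∀ j hj, NthMember (f j hj) (numeral j) cs :=
    fun j hj => Classical.choose_spec (hpos j hj)
  have hmapsto : ∀ j hj, f j hj ∈ Finset.Icc 1 n := by
    intro j hj
    rw [Finset.mem_Icc]
    exact ⟨nthMember_pos (hspec j hj), nthMember_le hlen (hspec j hj)⟩
  have hinj : ∀ j j' hj hj', f j hj = f j' hj' → j = j' := by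
    intro j j' hj hj' heq
    exact numeral_inj_s13 (nthMember_fun (hspec j hj) (heq ▸ hspec j' hj'))
  have hsurj := Finset.surj_on_of_inj_on_of_card_le f hmapsto hinj le_rfl
  intro k k' e e' hk hk' hkk' hee'
  have hkmem : k ∈ Finset.Icc 1 n :=
    Finset.mem_Icc.mpr ⟨nthMember_pos hk, nthMember_le hlen hk⟩
  have hk'mem : k' ∈ Finset.Icc 1 n :=
    Finset.mem_Icc.mpr ⟨nthMember_pos hk', nthMember_le hlen hk'⟩
  obtain ⟨j, hj, hfj⟩ := hsurj k hkmem
  obtain ⟨j', hj', hfj'⟩ := hsurj k' hk'mem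
  have he : e = numeral j := nthMember_fun hk (hfj ▸ hspec j hj)
  have he' : e' = numeral j' := nthMember_fun hk' (hfj' ▸ hspec j' hj')
  have hjj : j = j' := numeral_inj_s13 (by rw [← he, ← he', hee'])
  subst hjj
  exact hkk' (hfj.trans hfj'.symm)

theorem pq_mem_spec {i cs us ds : Term} (h : Atom.pq i cs us ds ∈ Spec) :
    ∃ k, 1 ≤ k ∧ NthMember k i cs ∧ NthMember k i us ∧ NthMember k i ds := by
  simp only [Spec, SpecPq, SpecPqs, Set.mem_union, Set.mem_setOf_eq] at h
  rcases h with ⟨i', cs', us', ds', k, hk, heq, h1, h2, h3⟩ | ⟨_, _, _, heq⟩ |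
    ⟨_, _, _, _, _, _, heq, _⟩
  · injection heq with e1 e2 e3 e4
    subst e1; subst e2; subst e3; subst e4
    exact ⟨k, hk, h1, h2, h3⟩
  · simp at heq
  · simp at heq

theorem pqs_mem_spec {i cs us ds : Term} (h : Atom.pqs i cs us ds ∈ Spec) :
    i = Term.zero ∨
    ∃ (m : ℕ) (t ds' : Term), 1 ≤ m ∧ i = numeral m ∧ ds = Term.cons t ds' ∧
      (∀ j, 1 ≤ j → j ≤ m → IsMember (numeral j) cs) ∧
      (DistinctList cs → CorrectUpTo m m cs us ds') := by
  simp only [Spec, SpecPq, SpecPqs, Set.mem_union, Set.mem_setOf_eq] at h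
  rcases h with ⟨_, _, _, _, _, _, heq, _⟩ | ⟨cs', us', ds', heq⟩ |
    ⟨m, cs', us', t, ds', hm, heq, hmem, hcorr⟩
  · simp at heq
  · injection heq with e1 e2 e3 e4
    exact Or.inl e1
  · injection heq with e1 e2 e3 e4
    subst e2; subst e3
    exact Or.inr ⟨m, t, ds', hm, e1, e4, hmem, hcorr⟩

theorem spec_isModel : IsModel NQUEENS Spec := by
  intro H B hcl hB
  cases hcl with
  | c1 x y z => exact Or.inr (Or.inl ⟨x, y, z, rfl⟩)
  | c3 i c u d =>
    exact Or.inl ⟨i, _, _, _, 1, le_rfl, rfl, .head _ _, .head _ _, .head _ _⟩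
  | c4 i cs us ds c u d =>
    obtain ⟨k, hk1, h1, h2, h3⟩ := pq_mem_spec (hB (Atom.pq i cs us ds) (by simp))
    exact Or.inl ⟨i, _, _, _, k + 1, by omega, rfl, .tail _ h1, .tail _ h2, .tail _ h3⟩
  | c2 i cs us ds u d =>
    have hb1 : Atom.pqs i cs (Term.cons u us) ds ∈ Spec := hB _ (by simp)
    have hb2 : Atom.pq (Term.succ i) cs us ds ∈ Spec := hB _ (by simp)
    obtain ⟨k, hk1, hkc, hku, hkd⟩ := pq_mem_spec hb2
    rcases pqs_mem_spec hb1 with hz | ⟨m, t, ds', hm, hi, hds, hmem, hcorr⟩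
    · -- i = zero : head is pqs (numeral 1) cs us (cons d ds)
      subst hz
      refine Or.inr (Or.inr ⟨1, cs, us, d, ds, le_rfl, rfl, ?_, ?_⟩)
      · intro j h1 h2
        have : j = 1 := by omega
        subst this
        exact ⟨k, hk1, hkc⟩
      · intro hd
        refine ⟨le_rfl, hd, ?_, ?_, ?_, ?_, ?_⟩
        · intro j h1 h2
          have : j = 1 := by omega
          subst this
          exact ⟨k, hk1, hkc⟩
        · intro j j' _ _ hj1 hjm hj'1 hj'm hne _ _; omega
        · intro j j' _ _ hj1 hjm hj'1 hj'm hne _ _; omega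
        · intro j k1 l hj1 hjm hn1 hl hlpos
          have hj : j = 1 := by omega
          subst hj
          have hkk : k1 = k := distinct_uniq hd hn1 hkc
          have : l = k := by omega
          subst this
          exact hku
        · intro j k1 l hj1 hjm hn1 hl hlpos
          have hj : j = 1 := by omega
          subst hj
          have hkk : k1 = k := distinct_uniq hd hn1 hkc
          have : l = k := by omega
          subst this
          exact hkd
    · -- i = numeral m, ds = cons t ds'
      subst hi; subst hds
      have hkc' : NthMember k (numeral (m + 1)) cs := hkc
      have hku' : NthMember k (numeral (m + 1)) us := hku
      have hkd' : NthMember k (numeral (m + 1)) (Term.cons t ds') := hkd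
      have hmem' : ∀ j, 1 ≤ j → j ≤ m + 1 → IsMember (numeral j) cs := by
        intro j h1 h2
        rcases Nat.lt_or_ge j (m + 1) with hlt | hge
        · exact hmem j h1 (by omega)
        · have : j = m + 1 := by omega
          subst this
          exact ⟨k, hk1, hkc'⟩
      refine Or.inr (Or.inr ⟨m + 1, cs, us, d, Term.cons t ds', by omega, rfl, hmem', ?_⟩)
      intro hd
      obtain ⟨_, _, Cmem, Cup, Cdown, CupR, CdownR⟩ := hcorr hd
      refine ⟨le_rfl, hd, hmem', ?_, ?_, ?_, ?_⟩
      · -- up-diagonal distinctness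
        intro j j' k1 k2 hj1 hjm hj'1 hj'm hne hn1 hn2 heq
        by_cases hj : j = m + 1 <;> by_cases hj' : j' = m + 1
        · exact hne (hj.trans hj'.symm)
        · subst hj
          have hkk : k1 = k := distinct_uniq hd hn1 hkc'
          have hrec : NthMember (k + 1) (numeral j') (Term.cons u us) :=
            CupR j' k2 (k + 1) hj'1 (by omega) hn2 (by omega) (by omega)
          have := nthMember_fun (nthMember_tail hk1 hrec) hku'
          exact hj' (numeral_inj_s13 this)
        · subst hj'
          have hkk : k2 = k := distinct_uniq hd hn2 hkc'
          have hrec : NthMember (k + 1) (numeral j) (Term.cons u us) :=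
            CupR j k1 (k + 1) hj1 (by omega) hn1 (by omega) (by omega)
          have := nthMember_fun (nthMember_tail hk1 hrec) hku'
          exact hj (numeral_inj_s13 this)
        · exact Cup j j' k1 k2 hj1 (by omega) hj'1 (by omega) hne hn1 hn2 (by omega)
      · -- down-diagonal distinctness
        intro j j' k1 k2 hj1 hjm hj'1 hj'm hne hn1 hn2 heq
        by_cases hj : j = m + 1 <;> by_cases hj' : j' = m + 1
        · exact hne (hj.trans hj'.symm)
        · subst hj
          have hkk : k1 = k := distinct_uniq hd hn1 hkc'
          have hk2p : 1 ≤ k2 := nthMember_pos hn2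
          have hj'm2 : j' ≤ m := by omega
          have hrec : NthMember (k - 1) (numeral j') ds' :=
            CdownR j' k2 (k - 1) hj'1 hj'm2 hn2 (by omega) (by omega)
          have hrec2 : NthMember (k - 1 + 1) (numeral j') (Term.cons t ds') :=
            NthMember.tail t hrec
          have hke : k - 1 + 1 = k := by omega
          rw [hke] at hrec2
          exact hj' (numeral_inj_s13 (nthMember_fun hrec2 hkd'))
        · subst hj'
          have hkk : k2 = k := distinct_uniq hd hn2 hkc'
          have hk1p : 1 ≤ k1 := nthMember_pos hn1
          have hjm2 : j ≤ m := by omega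
          have hrec : NthMember (k - 1) (numeral j) ds' :=
            CdownR j k1 (k - 1) hj1 hjm2 hn1 (by omega) (by omega)
          have hrec2 : NthMember (k - 1 + 1) (numeral j) (Term.cons t ds') :=
            NthMember.tail t hrec
          have hke : k - 1 + 1 = k := by omega
          rw [hke] at hrec2
          exact hj (numeral_inj_s13 (nthMember_fun hrec2 hkd'))
        · exact Cdown j j' k1 k2 hj1 (by omega) hj'1 (by omega) hne hn1 hn2 (by omega)
      · -- up-diagonal recording
        intro j k1 l hj1 hjm hn1 hl hlpos
        by_cases hj : j = m + 1
        · subst hj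
          have hkk : k1 = k := distinct_uniq hd hn1 hkc'
          have : l = k := by omega
          subst this
          exact hku'
        · have hrec : NthMember (l + 1) (numeral j) (Term.cons u us) :=
            CupR j k1 (l + 1) hj1 (by omega) hn1 (by omega) (by omega)
          exact nthMember_tail hlpos hrec
      · -- down-diagonal recording
        intro j k1 l hj1 hjm hn1 hl hlpos
        by_cases hj : j = m + 1
        · subst hj
          have hkk : k1 = k := distinct_uniq hd hn1 hkc'
          have : l = k := by omega
          subst this
          exact hkd'
        · have hk1p : 1 ≤ k1 := nthMember_pos hn1
          have hrec : NthMember (l - 1) (numeral j) ds' :=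
            CdownR j k1 (l - 1) hj1 (by omega) hn1 (by omega) (by omega)
          have hrec2 : NthMember (l - 1 + 1) (numeral j) (Term.cons t ds') :=
            NthMember.tail t hrec
          have hke : l - 1 + 1 = l := by omega
          rw [hke] at hrec2
          exact hrec2

/-- Answers of NQUEENS of full length are n-queens solutions. -/
theorem full_length_answers_are_solutions (n : ℕ) (hn : 1 ≤ n) (cs us u : Term)
    (hlen : ListOfLength n cs)
    (h : Atom.pqs (numeral n) cs us u ∈ LeastModel NQUEENS) :
    ∃ t ds : Term, u = Term.cons t ds ∧
      (∀ j : ℕ, 1 ≤ j → j ≤ n → IsMember (numeral j) cs) ∧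
      DistinctList cs ∧
      CorrectUpTo n n cs us ds := by
  have hspec : Atom.pqs (numeral n) cs us u ∈ Spec :=
    Set.mem_sInter.mp h Spec spec_isModel
  rcases pqs_mem_spec hspec with hz | ⟨m, t, ds', hm, hi, hds, hmem, hcorr⟩
  · exfalso
    cases n with
    | zero => omega
    | succ n => simp [numeral] at hz
  · have hmn : n = m := numeral_inj_s13 hi
    subst hmn
    have hd : DistinctList cs := distinct_of_full hlen hmem
    exact ⟨t, ds', hds, hmem, hd, hcorr hd⟩
end
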